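/- There exists a constant d (depending only on the universal machine) such that for every n and every AM protocol Π = {Π_r}_{r ∈ S} over {0,1}^n × {0,1}^n that computes f(x,y) = x ⊕ y (bitwise XOR), the communication cost of Π satisfies log₂(max_{r ∈ S} |𝓡_r|) ≥ 2n − log₂ ρ(Π) − d. -/

import Mathlib

/-- A machine maps a program and a condition string to at most one output string. -/
abbrev Machine := List Bool → List Bool →. List Bool

/-- Conditional Kolmogorov complexity relative to machine `U`. -/
noncomputable def KC (U : Machine) (x u : List Bool) : ℕ :=
  sInf { k | ∃ p : List Bool, p.length = k ∧ x ∈ U p u }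

/-- `U` is a universal machine. -/
def IsUniversal (U : Machine) : Prop :=
  Partrec₂ U ∧
    ∀ V : Machine, Partrec₂ V →
      ∃ c : ℕ, ∀ p u x, x ∈ V p u → ∃ q : List Bool, x ∈ U q u ∧ q.length ≤ p.length + c

/-- Self-delimiting encoding of a string. -/
def eBits (x : List Bool) : List Bool := (x.map fun b => [b, b]).flatten ++ [true, false]

/-- The fixed computable pairing of strings. -/
def ePair (x y : List Bool) : List Bool := eBits x ++ y

/-- Encoding of a list of strings. -/
def eList (l : List (List Bool)) : List Bool := (l.map eBits).flatten

/-- Conditional mutual information `I(x : y ∣ u)`. -/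
noncomputable def MI (U : Machine) (x y u : List Bool) : ℝ :=
  (KC U x u : ℝ) + KC U y u - KC U (ePair x y) u

/-- Conditional triple information `I(x : y : w ∣ u)`. -/
noncomputable def TI (U : Machine) (x y w u : List Bool) : ℝ :=
  (KC U x u : ℝ) + KC U y u + KC U w u - KC U (ePair x y) u - KC U (ePair x w) u
    - KC U (ePair y w) u + KC U (ePair x (ePair y w)) u

/-- A combinatorial rectangle, given by its list of rows and list of columns. -/
structure Rect where
  rows : List (List Bool)
  cols : List (List Bool)
deriving DecidableEq

/-- Canonical encoding of a rectangle. -/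
def encRect (R : Rect) : List Bool := ePair (eList R.rows) (eList R.cols)

/-- The list of all bit strings of length `n`. -/
def allBV : ℕ → List (List Bool)
  | 0 => [[]]
  | n + 1 => (allBV n).flatMap fun x => [false :: x, true :: x]

/-- A nondeterministic communication protocol over `{0,1}^{n₁} × {0,1}^{n₂}`:
a finite family of rectangles covering the domain together with a transcript
function selecting, for every cell of the domain, a rectangle containing it. -/
structure Protocol (n₁ n₂ : ℕ) where
  rects : List Rect
  trans : List Bool → List Bool → Rect
  rows_len : ∀ R ∈ rects, ∀ s ∈ R.rows, s.length = n₁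
  cols_len : ∀ R ∈ rects, ∀ s ∈ R.cols, s.length = n₂
  trans_mem : ∀ x y : List Bool, x.length = n₁ → y.length = n₂ → trans x y ∈ rects
  trans_row : ∀ x y : List Bool, x.length = n₁ → y.length = n₂ → x ∈ (trans x y).rows
  trans_col : ∀ x y : List Bool, x.length = n₁ → y.length = n₂ → y ∈ (trans x y).cols

/-- The thickness of a cell: the number of rectangles of the protocol containing it. -/
def cellThick {n₁ n₂ : ℕ} (P : Protocol n₁ n₂) (x y : List Bool) : ℕ :=
  P.rects.countP fun R => decide (x ∈ R.rows ∧ y ∈ R.cols)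

/-- The thickness of a rectangle: the maximal thickness of a cell of the rectangle. -/
def rectThick {n₁ n₂ : ℕ} (P : Protocol n₁ n₂) (R : Rect) : ℕ :=
  (R.rows.flatMap fun x => R.cols.map fun y => cellThick P x y).foldr max 0

/-- Canonical encoding of a protocol: the list of its rectangles followed by
the graph of the transcript function on the domain. -/
def encProt {n₁ n₂ : ℕ} (P : Protocol n₁ n₂) : List Bool :=
  ePair (eList (P.rects.map encRect))
    (eList ((allBV n₁).flatMap fun x => (allBV n₂).map fun y => encRect (P.trans x y)))

/-- A protocol with error: a protocol together with output functions of Alice and Bob. -/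
structure EProtocol (n₁ n₂ : ℕ) extends Protocol n₁ n₂ where
  gA : List Bool → Rect → List Bool
  gB : List Bool → Rect → List Bool

/-- Canonical encoding of a protocol with error. -/
def encEProt {n₁ n₂ : ℕ} (P : EProtocol n₁ n₂) : List Bool :=
  ePair (encProt P.toProtocol)
    (ePair (eList ((allBV n₁).flatMap fun x => P.rects.map fun R => P.gA x R))
           (eList ((allBV n₂).flatMap fun y => P.rects.map fun R => P.gB y R)))

/-- Bitwise XOR of two bit strings. -/
def xorStr (x y : List Bool) : List Bool := List.zipWith xor x y

/-- The thickness of a protocol: the maximal thickness of a cell of the domain. -/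
def protThick {n₁ n₂ : ℕ} (P : Protocol n₁ n₂) : ℕ :=
  ((allBV n₁).flatMap fun x => (allBV n₂).map fun y => cellThick P x y).foldr max 0

/-!
Averaging over the seeds, some protocol `Π_r` is correct on at least `2/3` of the `4ⁿ` cells.
A correct cell `(x, y)` lying in the transcript rectangle `R` satisfies `g_A(x, R) = x ⊕ y = g_B(y, R)`,
so inside `R` the row of a correct cell determines its column and vice versa: the correct cells
with transcript `R` form a matching, hence number at most `√|R|`. By Cauchy–Schwarz there are at
most `√(|𝓡_r| · ∑_R |R|)` correct cells, and `∑_R |R| ≤ ρ · 4ⁿ` since every cell lies in at most `ρ`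
rectangles. So `(2/3 · 4ⁿ)² ≤ |𝓡_r| · ρ · 4ⁿ`, and `d = log₂ (9/4)` works.
-/

open Finset

lemma mem_allBV {n : ℕ} {x : List Bool} : x ∈ allBV n ↔ x.length = n := by
  induction n generalizing x with
  | zero => simp [allBV, List.length_eq_zero_iff]
  | succ n ih =>
    cases x with
    | nil => simp [allBV]
    | cons b x => cases b <;> simp [allBV, ih]

def cube (n : ℕ) : Finset (List Bool) := (allBV n).toFinset

@[simp]
lemma mem_cube {n : ℕ} {x : List Bool} : x ∈ cube n ↔ x.length = n := by
  simp [cube, mem_allBV]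

lemma cube_eq_map_toList (n : ℕ) :
    cube n =
      (univ : Finset (List.Vector Bool n)).map ⟨List.Vector.toList, List.Vector.toList_injective⟩ := by
  ext x
  simp only [mem_cube, mem_map, mem_univ, true_and, Function.Embedding.coeFn_mk]
  exact ⟨fun h => ⟨⟨x, h⟩, rfl⟩, by rintro ⟨v, rfl⟩; exact v.toList_length⟩

lemma card_cube (n : ℕ) : #(cube n) = 2 ^ n := by
  simp [cube_eq_map_toList, card_vector]

lemma xorStr_comm (x y : List Bool) : xorStr x y = xorStr y x :=
  List.zipWith_comm_of_comm Bool.xor_comm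

lemma xorStr_xorStr_of_length_le {x y : List Bool} (h : y.length ≤ x.length) :
    xorStr x (xorStr x y) = y := by
  induction x generalizing y with
  | nil => simp_all [xorStr]
  | cons a x ih =>
    cases y with
    | nil => rfl
    | cons b y => simp_all [xorStr]

lemma injOn_xorStr_cube {n : ℕ} {x : List Bool} (hx : x ∈ cube n) :
    Set.InjOn (xorStr x) (cube n) := fun y hy z hz h => by
  rw [← xorStr_xorStr_of_length_le (x := x) (y := y), h, xorStr_xorStr_of_length_le] <;>
    simp_all

lemma injOn_xorStr_cube_left {n : ℕ} {y : List Bool} (hy : y ∈ cube n) :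
    Set.InjOn (xorStr · y) (cube n) := by
  simpa only [xorStr_comm _ y] using injOn_xorStr_cube hy

def Rect.cells (R : Rect) (n₁ n₂ : ℕ) : Finset (List Bool × List Bool) :=
  (cube n₁).filter (· ∈ R.rows) ×ˢ (cube n₂).filter (· ∈ R.cols)

namespace Protocol

variable {n₁ n₂ : ℕ} (P : Protocol n₁ n₂)

lemma cellThick_le_protThick {x y : List Bool} (hx : x.length = n₁) (hy : y.length = n₂) :
    cellThick P x y ≤ protThick P :=
  List.le_max_of_le (List.mem_flatMap.mpr
    ⟨x, mem_allBV.mpr hx, List.mem_map.mpr ⟨y, mem_allBV.mpr hy, rfl⟩⟩) le_rfl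

lemma card_filter_mem_rects_le_cellThick (x y : List Bool) :
    #(P.rects.toFinset.filter fun R => x ∈ R.rows ∧ y ∈ R.cols) ≤ cellThick P x y := by
  rw [cellThick, List.countP_eq_length_filter]
  have := List.toFinset_card_le (P.rects.filter fun R => decide (x ∈ R.rows ∧ y ∈ R.cols))
  simpa only [List.toFinset_filter, decide_eq_true_eq] using this

lemma sum_card_cells_le :
    ∑ R ∈ P.rects.toFinset, #(R.cells n₁ n₂) ≤ 2 ^ n₁ * 2 ^ n₂ * protThick P := by
  have hcells : ∀ R : Rect,
      R.cells n₁ n₂ = (cube n₁ ×ˢ cube n₂).filter fun p => p.1 ∈ R.rows ∧ p.2 ∈ R.cols :=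
    fun R => (filter_product _ _).symm
  calc ∑ R ∈ P.rects.toFinset, #(R.cells n₁ n₂)
      = ∑ p ∈ cube n₁ ×ˢ cube n₂,
          #(P.rects.toFinset.filter fun R => p.1 ∈ R.rows ∧ p.2 ∈ R.cols) := by
        simp only [hcells]
        exact sum_card_bipartiteAbove_eq_sum_card_bipartiteBelow _
    _ ≤ ∑ _p ∈ cube n₁ ×ˢ cube n₂, protThick P := by
        refine sum_le_sum fun p hp => ?_
        obtain ⟨hx, hy⟩ := mem_product.mp hp
        exact (P.card_filter_mem_rects_le_cellThick _ _).trans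
          (P.cellThick_le_protThick (mem_cube.mp hx) (mem_cube.mp hy))
    _ = 2 ^ n₁ * 2 ^ n₂ * protThick P := by
        rw [sum_const, card_product, card_cube, card_cube, smul_eq_mul]

end Protocol

namespace EProtocol

variable {n₁ n₂ : ℕ} (P : EProtocol n₁ n₂) (f : List Bool → List Bool → List Bool)

def OutputsAt (x y : List Bool) : Prop :=
  P.gA x (P.trans x y) = f x y ∧ P.gB y (P.trans x y) = f x y

instance (x y : List Bool) : Decidable (P.OutputsAt f x y) := instDecidableAnd

def correctCells : Finset (List Bool × List Bool) :=
  (cube n₁ ×ˢ cube n₂).filter fun p => P.OutputsAt f p.1 p.2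

variable {f}

lemma sq_card_correctCells_filter_trans_le
    (hrow : ∀ x ∈ cube n₁, Set.InjOn (f x) (cube n₂))
    (hcol : ∀ y ∈ cube n₂, Set.InjOn (f · y) (cube n₁)) (R : Rect) :
    #((P.correctCells f).filter fun p => P.trans p.1 p.2 = R) ^ 2 ≤ #(R.cells n₁ n₂) := by
  set F := (P.correctCells f).filter fun p => P.trans p.1 p.2 = R
  have hF : ∀ p ∈ F, p.1 ∈ cube n₁ ∧ p.2 ∈ cube n₂ ∧ P.trans p.1 p.2 = R ∧
      P.gA p.1 R = f p.1 p.2 ∧ P.gB p.2 R = f p.1 p.2 := by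
    intro p hp
    obtain ⟨hpc, hR⟩ := mem_filter.mp hp
    obtain ⟨hxy, hA, hB⟩ := mem_filter.mp hpc
    obtain ⟨hx, hy⟩ := mem_product.mp hxy
    exact ⟨hx, hy, hR, hR ▸ hA, hR ▸ hB⟩
  have hrows : #F ≤ #((cube n₁).filter (· ∈ R.rows)) := by
    refine card_le_card_of_injOn Prod.fst (fun p hp => ?_) (fun p hp q hq hpq => ?_)
    · obtain ⟨hx, hy, hR, -⟩ := hF p hp
      exact mem_filter.mpr ⟨hx, hR ▸ P.trans_row _ _ (mem_cube.mp hx) (mem_cube.mp hy)⟩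
    · obtain ⟨hx, hy, -, hA, -⟩ := hF p hp
      obtain ⟨-, hy', -, hA', -⟩ := hF q hq
      have hpq : p.1 = q.1 := hpq
      refine Prod.ext hpq (hrow _ hx hy hy' ?_)
      rw [← hA, hpq, hA']
  have hcols : #F ≤ #((cube n₂).filter (· ∈ R.cols)) := by
    refine card_le_card_of_injOn Prod.snd (fun p hp => ?_) (fun p hp q hq hpq => ?_)
    · obtain ⟨hx, hy, hR, -⟩ := hF p hp
      exact mem_filter.mpr ⟨hy, hR ▸ P.trans_col _ _ (mem_cube.mp hx) (mem_cube.mp hy)⟩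
    · obtain ⟨hx, hy, -, -, hB⟩ := hF p hp
      obtain ⟨hx', -, -, -, hB'⟩ := hF q hq
      have hpq : p.2 = q.2 := hpq
      refine Prod.ext (hcol _ hy hx hx' ?_) hpq
      show f p.1 p.2 = f q.1 p.2
      rw [← hB, hpq, hB']
  rw [sq, Rect.cells, card_product]
  exact Nat.mul_le_mul hrows hcols

lemma sq_card_correctCells_le
    (hrow : ∀ x ∈ cube n₁, Set.InjOn (f x) (cube n₂))
    (hcol : ∀ y ∈ cube n₂, Set.InjOn (f · y) (cube n₁)) :
    #(P.correctCells f) ^ 2 ≤ P.rects.length * (2 ^ n₁ * 2 ^ n₂ * protThick P.toProtocol) := by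
  have htrans : ∀ p ∈ P.correctCells f, P.trans p.1 p.2 ∈ P.rects.toFinset := fun p hp => by
    obtain ⟨hx, hy⟩ := mem_product.mp (mem_filter.mp hp).1
    exact List.mem_toFinset.mpr (P.trans_mem _ _ (mem_cube.mp hx) (mem_cube.mp hy))
  calc #(P.correctCells f) ^ 2
      = (∑ R ∈ P.rects.toFinset,
          #((P.correctCells f).filter fun p => P.trans p.1 p.2 = R)) ^ 2 := by
        rw [card_eq_sum_card_fiberwise htrans]
    _ ≤ #P.rects.toFinset *
          ∑ R ∈ P.rects.toFinset, #((P.correctCells f).filter fun p => P.trans p.1 p.2 = R) ^ 2 :=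
        sq_sum_le_card_mul_sum_sq
    _ ≤ P.rects.length * ∑ R ∈ P.rects.toFinset, #(R.cells n₁ n₂) :=
        Nat.mul_le_mul (List.toFinset_card_le _)
          (sum_le_sum fun R _ => P.sq_card_correctCells_filter_trans_le hrow hcol R)
    _ ≤ _ := Nat.mul_le_mul_left _ P.sum_card_cells_le

end EProtocol

lemma exists_mul_card_le_card_filter {ι α : Type*} [Fintype ι] [Nonempty ι] (s : Finset α)
    (p : ι → α → Prop) [∀ i a, Decidable (p i a)] {c : ℝ}
    (h : ∀ a ∈ s, c * Fintype.card ι ≤ #(univ.filter (p · a))) :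
    ∃ i, c * #s ≤ #(s.filter (p i)) := by
  have hsum : ∑ _i : ι, c * #s ≤ ∑ i, (#(s.filter (p i)) : ℝ) :=
    calc ∑ _i : ι, c * #s = ∑ _a ∈ s, c * Fintype.card ι := by
          simp only [sum_const, card_univ, nsmul_eq_mul]; ring
      _ ≤ ∑ a ∈ s, (#(univ.filter (p · a)) : ℝ) := sum_le_sum h
      _ = ∑ i, (#(s.filter (p i)) : ℝ) := by
          exact_mod_cast (sum_card_bipartiteAbove_eq_sum_card_bipartiteBelow p).symm
  obtain ⟨i, -, hi⟩ := exists_le_of_sum_le univ_nonempty hsum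
  exact ⟨i, hi⟩

lemma logb_sub_le_logb_add_logb {N G M ρ : ℕ} (hN : 0 < N) (hG : 2 / 3 * (N : ℝ) ≤ G)
    (hsq : G ^ 2 ≤ M * (N * ρ)) :
    Real.logb 2 N - Real.logb 2 (9 / 4) ≤ Real.logb 2 M + Real.logb 2 ρ := by
  have hNpos : (0 : ℝ) < N := by exact_mod_cast hN
  have hsq' : (G : ℝ) ^ 2 ≤ M * (N * ρ) := by exact_mod_cast hsq
  have hMρ : 4 / 9 * (N : ℝ) ≤ M * ρ := by
    refine le_of_mul_le_mul_right ?_ hNpos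
    nlinarith [pow_le_pow_left₀ (by positivity) hG 2]
  have hpos : (0 : ℝ) < M * ρ := by linarith
  have hM : (M : ℝ) ≠ 0 := by rintro h; simp [h] at hpos
  have hρ : (ρ : ℝ) ≠ 0 := by rintro h; simp [h] at hpos
  calc Real.logb 2 N - Real.logb 2 (9 / 4) = Real.logb 2 (N / (9 / 4)) :=
        (Real.logb_div hNpos.ne' (by norm_num)).symm
    _ ≤ Real.logb 2 (M * ρ) := Real.logb_le_logb_of_le one_lt_two (by positivity) (by linarith)
    _ = Real.logb 2 M + Real.logb 2 ρ := Real.logb_mul hM hρ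

theorem stmt11_general :
    ∃ d : ℝ, ∀ n m : ℕ, 0 < m → ∀ Pr : Fin m → EProtocol n n,
      (∀ x y : List Bool, x.length = n → y.length = n →
        ((Finset.univ.filter fun r : Fin m =>
            (Pr r).gA x ((Pr r).trans x y) = xorStr x y ∧
            (Pr r).gB y ((Pr r).trans x y) = xorStr x y).card : ℝ) ≥ (2 / 3) * m) →
      Real.logb 2 ((Finset.univ.sup fun r : Fin m => (Pr r).rects.length : ℕ) : ℝ) ≥
        2 * n - Real.logb 2 ((Finset.univ.sup fun r : Fin m => protThick (Pr r).toProtocol : ℕ) : ℝ)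
          - d := by
  refine ⟨Real.logb 2 (9 / 4), fun n m hm Pr hcomp => ?_⟩
  have : Nonempty (Fin m) := ⟨⟨0, hm⟩⟩
  obtain ⟨r, hr⟩ := exists_mul_card_le_card_filter (cube n ×ˢ cube n)
    (fun r p => (Pr r).OutputsAt xorStr p.1 p.2) (c := 2 / 3) fun p hp => by
      obtain ⟨hx, hy⟩ := mem_product.mp hp
      simpa [EProtocol.OutputsAt] using hcomp p.1 p.2 (mem_cube.mp hx) (mem_cube.mp hy)
  have hsq : #((Pr r).correctCells xorStr) ^ 2 ≤ (univ.sup fun r => (Pr r).rects.length) *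
      (2 ^ n * 2 ^ n * univ.sup fun r => protThick (Pr r).toProtocol) := by
    refine ((Pr r).sq_card_correctCells_le (fun _ hx => injOn_xorStr_cube hx)
      (fun _ hy => injOn_xorStr_cube_left hy)).trans ?_
    gcongr
    · exact le_sup (f := fun r => (Pr r).rects.length) (mem_univ r)
    · exact le_sup (f := fun r => protThick (Pr r).toProtocol) (mem_univ r)
  have hlog := logb_sub_le_logb_add_logb (by positivity)
    (by simpa [card_cube, EProtocol.correctCells] using hr) hsq
  have hN : Real.logb 2 ((2 ^ n * 2 ^ n : ℕ) : ℝ) = 2 * n := by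
    rw [← pow_add, Nat.cast_pow, Real.logb_pow, Nat.cast_ofNat, Real.logb_self_eq_one one_lt_two]
    push_cast
    ring
  linarith

/-- Any AM protocol computing bitwise XOR has communication cost at least
`2n - log₂ ρ(Π) - d`. -/
theorem stmt11 (U : Machine) (hU : IsUniversal U) :
    ∃ d : ℝ, ∀ n m : ℕ, 0 < m → ∀ Pr : Fin m → EProtocol n n,
      (∀ x y : List Bool, x.length = n → y.length = n →
        ((Finset.univ.filter fun r : Fin m =>
            (Pr r).gA x ((Pr r).trans x y) = xorStr x y ∧
            (Pr r).gB y ((Pr r).trans x y) = xorStr x y).card : ℝ) ≥ (2 / 3) * m) →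
      Real.logb 2 ((Finset.univ.sup fun r : Fin m => (Pr r).rects.length : ℕ) : ℝ) ≥
        2 * n - Real.logb 2 ((Finset.univ.sup fun r : Fin m => protThick (Pr r).toProtocol : ℕ) : ℝ)
          - d :=
  stmt11_general
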